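/- arXiv:2407.15803 — 2 statements merged into one kernel-verified Lean document; each statement's English description precedes it below -/
import Mathlib

section
/- The functions ψ_α(z) = (z₁^{α₁}/√(π α₁!)) (z₂^{α₂}/√(π α₂!)) · exp(½⟨Az, z⟩), for α = (α₁, α₂) ∈ ℕ², form an orthonormal system in H_A; i.e. ∫_{ℂ²} ψ_α(z) conj(ψ_{α'}(z)) exp(-Re⟨Az,z⟩ - |z|²) dλ(z) = δ_{α α'}. -/
open MeasureTheory Real Complex

/-- The quadratic form `⟨Az, z⟩ = β₁z₁² + 2κz₁z₂ + β₂z₂²`. -/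
noncomputable def Qform (β₁ β₂ κ : ℝ) (z : ℂ × ℂ) : ℂ :=
  (β₁ : ℂ) * z.1 ^ 2 + 2 * (κ : ℂ) * z.1 * z.2 + (β₂ : ℂ) * z.2 ^ 2

/-- The functions `ψ_α(z) = z₁^{α₁} z₂^{α₂} / (√(πα₁!)√(πα₂!)) · exp(½⟨Az,z⟩)`. -/
noncomputable def psiA (β₁ β₂ κ : ℝ) (α : ℕ × ℕ) (z : ℂ × ℂ) : ℂ :=
  z.1 ^ α.1 * z.2 ^ α.2 /
    ((Real.sqrt (Real.pi * (Nat.factorial α.1)) : ℂ) *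
      (Real.sqrt (Real.pi * (Nat.factorial α.2)) : ℂ)) *
    Complex.exp (Qform β₁ β₂ κ z / 2)

/-- The weight `exp(-Re⟨Az,z⟩ - |z|²)` of the space `H_A`. -/
noncomputable def weightA (β₁ β₂ κ : ℝ) (z : ℂ × ℂ) : ℝ :=
  Real.exp (-(Qform β₁ β₂ κ z).re - (‖z.1‖ ^ 2 + ‖z.2‖ ^ 2))

/-!
Since `|exp(½⟨Az,z⟩)|² = exp(Re⟨Az,z⟩)`, the weight of `H_A` cancels the exponential factor of
`ψ_α ψ̄_α'` up to the Gaussian `e^{-|z₁|²-|z₂|²}`, so the integral splits into two integrals over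
`ℂ` for the classical Fock space with weight `e^{-|w|²}`. There the monomials `wⁿ/√(π n!)` are
orthonormal: in polar coordinates the angular integral of `e^{i(a-b)θ}` vanishes unless `a = b`,
and the radial integral `∫₀^∞ r^{2n+1} e^{-r²} dr = n!/2` is a Gamma value.
-/

open scoped Nat ComplexConjugate

lemma integral_Ioo_exp_int_mul_I (k : ℤ) :
    ∫ θ : ℝ in Set.Ioo (-π) π, cexp (k * θ * I) = if k = 0 then ((2 * π : ℝ) : ℂ) else 0 := by
  split_ifs with hk
  · simp [hk, Real.volume_real_Ioo_of_le (by linarith [pi_pos] : -π ≤ π), two_mul]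
  · have hc : (k : ℂ) * I ≠ 0 := mul_ne_zero (by exact_mod_cast hk) I_ne_zero
    simp_rw [mul_right_comm _ _ I]
    rw [← integral_Ioc_eq_integral_Ioo,
      ← intervalIntegral.integral_of_le (by linarith [pi_pos] : -π ≤ π),
      integral_exp_mul_complex hc, ofReal_neg]
    have hperiodic : cexp (k * I * π) = cexp (k * I * (-π)) :=
      exp_eq_exp_iff_exists_int.2 ⟨k, by ring⟩
    rw [hperiodic, sub_self, zero_div]

lemma integral_Ioi_pow_mul_exp_neg_sq (n : ℕ) :
    ∫ r in Set.Ioi (0 : ℝ), r ^ (2 * n + 1) * rexp (-r ^ 2) = n ! / 2 := by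
  have hrpow : ∀ r ∈ Set.Ioi (0 : ℝ),
      r ^ (2 * n + 1) * rexp (-r ^ 2) = r ^ ((2 * n + 1 : ℕ) : ℝ) * rexp (-r ^ (2 : ℝ)) :=
    fun r _ ↦ by rw [Real.rpow_natCast, Real.rpow_two]
  rw [setIntegral_congr_fun measurableSet_Ioi hrpow,
    _root_.integral_rpow_mul_exp_neg_rpow two_pos (by push_cast; linarith),
    show (((2 * n + 1 : ℕ) : ℝ) + 1) / 2 = n + 1 by push_cast; ring,
    Real.Gamma_nat_eq_factorial]
  ring

lemma integral_pow_mul_conj_pow_mul_exp_neg_norm_sq (a b : ℕ) :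
    ∫ z : ℂ, z ^ a * conj z ^ b * (rexp (-‖z‖ ^ 2) : ℂ)
      = if a = b then ((π * a ! : ℝ) : ℂ) else 0 := by
  rw [← Complex.integral_comp_polarCoord_symm, polarCoord_target]
  have hpolar : ∀ p ∈ Set.Ioi (0 : ℝ) ×ˢ Set.Ioo (-π) π,
      p.1 • ((Complex.polarCoord.symm p) ^ a * conj (Complex.polarCoord.symm p) ^ b
        * (rexp (-‖Complex.polarCoord.symm p‖ ^ 2) : ℂ))
      = (p.1 : ℂ) ^ (a + b + 1) * (rexp (-p.1 ^ 2) : ℂ)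
        * cexp (((a - b : ℤ) : ℂ) * p.2 * I) := by
    rintro ⟨r, θ⟩ ⟨hr, -⟩
    have hsymm : Complex.polarCoord.symm (r, θ) = r * cexp (θ * I) := by
      rw [Complex.polarCoord_symm_apply, exp_mul_I]
      push_cast
      ring
    rw [Complex.norm_polarCoord_symm, abs_of_pos hr, hsymm, real_smul]
    have hphase : cexp (θ * I) ^ a * cexp (-(θ * I)) ^ b = cexp (((a - b : ℤ) : ℂ) * θ * I) := by
      rw [← Complex.exp_nat_mul, ← Complex.exp_nat_mul, ← Complex.exp_add]
      push_cast
      ring_nf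
    simp only [map_mul, ← exp_conj, conj_I, conj_ofReal, mul_pow, mul_neg]
    rw [← hphase]
    ring
  rw [setIntegral_congr_fun (measurableSet_Ioi.prod measurableSet_Ioo) hpolar,
    Measure.volume_eq_prod,
    setIntegral_prod_mul (fun r : ℝ ↦ (r : ℂ) ^ (a + b + 1) * (rexp (-r ^ 2) : ℂ))
      (fun θ : ℝ ↦ cexp (((a - b : ℤ) : ℂ) * θ * I)),
    integral_Ioo_exp_int_mul_I]
  simp only [sub_eq_zero, Nat.cast_inj]
  split_ifs with hab
  · subst hab
    have hradial : ∫ r in Set.Ioi (0 : ℝ), (r : ℂ) ^ (a + a + 1) * (rexp (-r ^ 2) : ℂ)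
        = ((a ! / 2 : ℝ) : ℂ) := by
      rw [← integral_Ioi_pow_mul_exp_neg_sq a, ← integral_complex_ofReal, two_mul]
      push_cast
      rfl
    rw [hradial]
    push_cast
    ring
  · rw [mul_zero]

noncomputable def fockMonomial (n : ℕ) (w : ℂ) : ℂ :=
  w ^ n / (Real.sqrt (π * n !) : ℂ)

lemma integral_fockMonomial_mul_conj (a b : ℕ) :
    ∫ w : ℂ, fockMonomial a w * conj (fockMonomial b w) * (rexp (-‖w‖ ^ 2) : ℂ)
      = if a = b then 1 else 0 := by
  have hconst : ∀ w : ℂ, fockMonomial a w * conj (fockMonomial b w) * (rexp (-‖w‖ ^ 2) : ℂ)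
      = ((√(π * a !) * √(π * b !) : ℝ) : ℂ)⁻¹ * (w ^ a * conj w ^ b * (rexp (-‖w‖ ^ 2) : ℂ)) := by
    intro w
    simp only [fockMonomial, map_div₀, map_pow, conj_ofReal]
    push_cast
    ring
  simp_rw [hconst]
  rw [integral_const_mul, integral_pow_mul_conj_pow_mul_exp_neg_norm_sq]
  split_ifs with hab
  · subst hab
    have hpos : (0 : ℝ) < π * a ! := by positivity
    rw [Real.mul_self_sqrt hpos.le, inv_mul_cancel₀ (ofReal_ne_zero.2 hpos.ne')]
  · rw [mul_zero]

lemma exp_half_mul_conj_mul_exp_neg_re (Q : ℂ) (s : ℝ) :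
    cexp (Q / 2) * conj (cexp (Q / 2)) * (rexp (-Q.re - s) : ℂ) = rexp (-s) := by
  rw [← exp_conj, map_div₀, map_ofNat, ofReal_exp, ofReal_exp, ← Complex.exp_add,
    ← Complex.exp_add]
  congr 1
  have hre := add_conj Q
  push_cast at hre ⊢
  linear_combination hre / 2

lemma psiA_mul_conj_mul_weightA (β₁ β₂ κ : ℝ) (α α' : ℕ × ℕ) (z : ℂ × ℂ) :
    psiA β₁ β₂ κ α z * conj (psiA β₁ β₂ κ α' z) * (weightA β₁ β₂ κ z : ℂ)
      = (fockMonomial α.1 z.1 * conj (fockMonomial α'.1 z.1) * (rexp (-‖z.1‖ ^ 2) : ℂ))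
        * (fockMonomial α.2 z.2 * conj (fockMonomial α'.2 z.2) * (rexp (-‖z.2‖ ^ 2) : ℂ)) := by
  have hpsi : ∀ γ : ℕ × ℕ, psiA β₁ β₂ κ γ z
      = fockMonomial γ.1 z.1 * fockMonomial γ.2 z.2 * cexp (Qform β₁ β₂ κ z / 2) := by
    intro γ
    simp only [psiA, fockMonomial]
    ring
  have hgauss := exp_half_mul_conj_mul_exp_neg_re (Qform β₁ β₂ κ z) (‖z.1‖ ^ 2 + ‖z.2‖ ^ 2)
  rw [neg_add, Real.exp_add, ofReal_mul] at hgauss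
  rw [hpsi, hpsi, weightA, map_mul, map_mul]
  linear_combination fockMonomial α.1 z.1 * conj (fockMonomial α'.1 z.1)
    * fockMonomial α.2 z.2 * conj (fockMonomial α'.2 z.2) * hgauss

/-- the functions `ψ_α` form an orthonormal system in `H_A`. -/
theorem stmt_5 (β₁ β₂ κ : ℝ) (α α' : ℕ × ℕ) :
    (∫ z : ℂ × ℂ, psiA β₁ β₂ κ α z * (starRingEnd ℂ) (psiA β₁ β₂ κ α' z) *
        (weightA β₁ β₂ κ z : ℂ)) = if α = α' then 1 else 0 := by
  simp_rw [psiA_mul_conj_mul_weightA]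
  rw [Measure.volume_eq_prod,
    integral_prod_mul
      (fun w ↦ fockMonomial α.1 w * conj (fockMonomial α'.1 w) * (rexp (-‖w‖ ^ 2) : ℂ))
      (fun w ↦ fockMonomial α.2 w * conj (fockMonomial α'.2 w) * (rexp (-‖w‖ ^ 2) : ℂ)),
    integral_fockMonomial_mul_conj, integral_fockMonomial_mul_conj]
  simp only [ite_zero_mul_ite_zero, mul_one, Prod.ext_iff]
end

section
/- With ψ_α the orthonormal basis of H_A, the differentiation operator a₁(f) = ∂f/∂z₁ satisfies a₁(ψ_{α₁,α₂}) = √α₁ · ψ_{α₁-1,α₂} + β₁√(α₁+1) · ψ_{α₁+1,α₂} + κ√(α₂+1) · ψ_{α₁,α₂+1} (with the first term absent when α₁ = 0). -/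
/-!
Write `ψ_α = c_α z₁^α₁ z₂^α₂ e^{Q/2}` with `c_α = (√(π α₁!) √(π α₂!))⁻¹`. By the product rule,
`∂₁ψ_α = c_α α₁ z₁^(α₁-1) z₂^α₂ e^{Q/2} + (β₁z₁ + κz₂) ψ_α`, since `∂₁(Q/2) = β₁z₁ + κz₂`.
The normalisations satisfy `√(π (n+1)!) = √(n+1) √(π n!)`, which turns the first term into
`√α₁ ψ_{α₁-1,α₂}` and the multiplications by `z₁`, `z₂` into `√(α₁+1) ψ_{α₁+1,α₂}` and
`√(α₂+1) ψ_{α₁,α₂+1}`.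
-/

open MeasureTheory Real Complex

lemma sqrt_pi_mul_factorial_succ (n : ℕ) :
    √(π * (n + 1).factorial) = √(n + 1) * √(π * n.factorial) := by
  rw [← Real.sqrt_mul (by positivity)]
  push_cast [Nat.factorial_succ]
  ring_nf

lemma ofReal_sqrt_natCast_succ_ne_zero (n : ℕ) : ((√(n + 1) : ℝ) : ℂ) ≠ 0 := by
  exact_mod_cast (Real.sqrt_pos.mpr (by positivity)).ne'

lemma hasDerivAt_Qform_fst_div_two (β₁ β₂ κ : ℝ) (z : ℂ × ℂ) :
    HasDerivAt (fun w : ℂ => Qform β₁ β₂ κ (w, z.2) / 2) (β₁ * z.1 + κ * z.2) z.1 := by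
  refine ((((hasDerivAt_pow 2 z.1).const_mul (β₁ : ℂ)).fun_add
    (((hasDerivAt_id' z.1).const_mul (2 * (κ : ℂ))).mul_const z.2)).add_const
      ((β₂ : ℂ) * z.2 ^ 2)).div_const 2 |>.congr_deriv ?_
  push_cast
  ring

lemma hasDerivAt_psiA_fst (β₁ β₂ κ : ℝ) (α₁ α₂ : ℕ) (z : ℂ × ℂ) :
    HasDerivAt (fun w : ℂ => psiA β₁ β₂ κ (α₁, α₂) (w, z.2))
      (α₁ * z.1 ^ (α₁ - 1) * z.2 ^ α₂ /
          ((√(π * α₁.factorial) : ℂ) * (√(π * α₂.factorial) : ℂ)) *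
          Complex.exp (Qform β₁ β₂ κ z / 2) +
        (β₁ * z.1 + κ * z.2) * psiA β₁ β₂ κ (α₁, α₂) z) z.1 := by
  refine (((hasDerivAt_pow α₁ z.1).mul_const (z.2 ^ α₂)).div_const
    ((√(π * α₁.factorial) : ℂ) * (√(π * α₂.factorial) : ℂ))).fun_mul
      (hasDerivAt_Qform_fst_div_two β₁ β₂ κ z).cexp |>.congr_deriv ?_
  simp only [psiA]
  ring

lemma sqrt_mul_psiA_pred_fst (β₁ β₂ κ : ℝ) (α₁ α₂ : ℕ) (z : ℂ × ℂ) :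
    (√α₁ : ℂ) * psiA β₁ β₂ κ (α₁ - 1, α₂) z =
      α₁ * z.1 ^ (α₁ - 1) * z.2 ^ α₂ /
          ((√(π * α₁.factorial) : ℂ) * (√(π * α₂.factorial) : ℂ)) *
          Complex.exp (Qform β₁ β₂ κ z / 2) := by
  rcases α₁ with _ | n
  · simp
  have hsq : ((n + 1 : ℕ) : ℂ) = (√(n + 1) : ℂ) * (√(n + 1) : ℂ) := by
    rw [← ofReal_mul, Real.mul_self_sqrt (by positivity)]
    push_cast
    rfl
  simp only [psiA, Nat.add_sub_cancel, sqrt_pi_mul_factorial_succ, hsq]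
  push_cast
  field_simp [ofReal_sqrt_natCast_succ_ne_zero n]

lemma sqrt_succ_mul_psiA_succ_fst (β₁ β₂ κ : ℝ) (α₁ α₂ : ℕ) (z : ℂ × ℂ) :
    (√(α₁ + 1) : ℂ) * psiA β₁ β₂ κ (α₁ + 1, α₂) z = z.1 * psiA β₁ β₂ κ (α₁, α₂) z := by
  simp only [psiA, sqrt_pi_mul_factorial_succ]
  push_cast
  field_simp [ofReal_sqrt_natCast_succ_ne_zero α₁]
  ring

lemma sqrt_succ_mul_psiA_succ_snd (β₁ β₂ κ : ℝ) (α₁ α₂ : ℕ) (z : ℂ × ℂ) :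
    (√(α₂ + 1) : ℂ) * psiA β₁ β₂ κ (α₁, α₂ + 1) z = z.2 * psiA β₁ β₂ κ (α₁, α₂) z := by
  simp only [psiA, sqrt_pi_mul_factorial_succ]
  push_cast
  field_simp [ofReal_sqrt_natCast_succ_ne_zero α₂]
  ring

/-- the annihilation operator `a₁(f) = ∂f/∂z₁` satisfies
`a₁(ψ_{α₁,α₂}) = √α₁ ψ_{α₁-1,α₂} + β₁√(α₁+1) ψ_{α₁+1,α₂} + κ√(α₂+1) ψ_{α₁,α₂+1}`
(the first term being absent when `α₁ = 0`, since `√0 = 0`). -/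
theorem stmt_8 (β₁ β₂ κ : ℝ) (α₁ α₂ : ℕ) (z : ℂ × ℂ) :
    deriv (fun w : ℂ => psiA β₁ β₂ κ (α₁, α₂) (w, z.2)) z.1 =
      (Real.sqrt α₁ : ℂ) * psiA β₁ β₂ κ (α₁ - 1, α₂) z +
        (β₁ : ℂ) * (Real.sqrt (α₁ + 1) : ℂ) * psiA β₁ β₂ κ (α₁ + 1, α₂) z +
        (κ : ℂ) * (Real.sqrt (α₂ + 1) : ℂ) * psiA β₁ β₂ κ (α₁, α₂ + 1) z := by
  rw [(hasDerivAt_psiA_fst β₁ β₂ κ α₁ α₂ z).deriv, sqrt_mul_psiA_pred_fst, mul_assoc (β₁ : ℂ),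
    sqrt_succ_mul_psiA_succ_fst, mul_assoc (κ : ℂ), sqrt_succ_mul_psiA_succ_snd]
  ring
end
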